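/- arXiv:1607.01281 — 3 statements merged into one kernel-verified Lean document; each statement's English description precedes it below -/
import Mathlib

section
/- Let (X,d) be a geodesic metric space which is δ-hyperbolic (δ ≥ 0). Then there is a constant D ≥ 0, depending only on δ, and a constant E ≥ 0, depending only on R and δ, such that for all points x, y ∈ X with d(x,y) ≥ 2R + D, for any x' in the shadow S_y(x,R) and any y' in the shadow S_x(y,R), every geodesic segment from x' to y' contains a subsegment [p',q'] whose Hausdorff distance from a geodesic segment [x,y] is at most E (i.e. [p',q'] E-fellow travels [x,y]). -/
/-!
Project `x` and `y` to nearby points `p`, `q` of the geodesic `g` from `x'` to `y'`. The shadow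
conditions and `d(x, y) > 2R + δ` give `(x', y')_x, (x', y')_y ≤ R + δ`, and a point `w` is within
`(x', y')_w + 2δ` of `g`, so `d(x, p), d(y, q) ≤ R + 3δ`. Two geodesic segments whose endpoints are
`K`-close are at Hausdorff distance at most `K + 4δ`, as one sees by applying the four-point
condition twice, based at a point of one of them.
-/

/-- The Gromov product of `x` and `y` based at `u`. -/
noncomputable def gromovProd {X : Type*} [MetricSpace X] (u x y : X) : ℝ :=
  (dist u x + dist u y - dist x y) / 2

/-- `X` is δ-hyperbolic in the Gromov product sense. -/
def IsDeltaHyperbolic (X : Type*) [MetricSpace X] (δ : ℝ) : Prop :=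
  ∀ x y z w : X, gromovProd w x z ≥ min (gromovProd w x y) (gromovProd w y z) - δ

/-- `s` is a geodesic segment from `x` to `y`: the image of an isometric embedding of
the interval `[0, dist x y]` sending the endpoints to `x` and `y`. -/
def IsGeodesicSegment {X : Type*} [MetricSpace X] (s : Set X) (x y : X) : Prop :=
  ∃ γ : ℝ → X, γ 0 = x ∧ γ (dist x y) = y ∧
    (∀ u ∈ Set.Icc (0 : ℝ) (dist x y), ∀ v ∈ Set.Icc (0 : ℝ) (dist x y),
      dist (γ u) (γ v) = |u - v|) ∧
    s = γ '' Set.Icc (0 : ℝ) (dist x y)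

/-- `X` is a geodesic metric space. -/
def IsGeodesicSpace (X : Type*) [MetricSpace X] : Prop :=
  ∀ x y : X, ∃ s : Set X, IsGeodesicSegment s x y

/-- The shadow `S_x(y, R) = { z | (y, z)_x ≥ d(x,y) - R }`. -/
def shadow {X : Type*} [MetricSpace X] (x y : X) (R : ℝ) : Set X :=
  { z : X | gromovProd x y z ≥ dist x y - R }

section

open Set

variable {X : Type*} [MetricSpace X]

lemma gromovProd_comm (u x y : X) : gromovProd u x y = gromovProd u y x := by
  simp only [gromovProd, dist_comm x y, add_comm (dist u x)]

lemma mem_shadow_iff {x y z : X} {R : ℝ} : z ∈ shadow x y R ↔ gromovProd y x z ≤ R := by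
  simp only [shadow, gromovProd, mem_ofPred_eq, dist_comm y x]
  constructor <;> intro h <;> linarith

lemma dist_endpoints_of_isometric_Icc {γ : ℝ → X} {L t : ℝ}
    (hiso : ∀ u ∈ Icc (0 : ℝ) L, ∀ v ∈ Icc (0 : ℝ) L, dist (γ u) (γ v) = |u - v|)
    (ht : t ∈ Icc 0 L) : dist (γ 0) (γ t) = t ∧ dist (γ t) (γ L) = L - t := by
  have hL : 0 ≤ L := ht.1.trans ht.2
  rw [hiso 0 ⟨le_rfl, hL⟩ t ht, hiso t ht L ⟨hL, le_rfl⟩, zero_sub, abs_neg,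
    abs_of_nonneg ht.1, abs_of_nonpos (sub_nonpos.mpr ht.2), neg_sub]
  exact ⟨rfl, rfl⟩

lemma isGeodesicSegment_image_Icc {γ : ℝ → X} {L a b : ℝ}
    (hiso : ∀ u ∈ Icc (0 : ℝ) L, ∀ v ∈ Icc (0 : ℝ) L, dist (γ u) (γ v) = |u - v|)
    (ha : a ∈ Icc 0 L) (hb : b ∈ Icc 0 L) (hab : a ≤ b) :
    IsGeodesicSegment (γ '' Icc a b) (γ a) (γ b) := by
  have hd : dist (γ a) (γ b) = b - a := by
    rw [hiso a ha b hb, abs_of_nonpos (by linarith), neg_sub]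
  refine ⟨fun t => γ (t + a), by simp, by simp [hd], ?_, ?_⟩
  · intro u hu v hv
    rw [hd] at hu hv
    rw [hiso (u + a) ⟨by linarith [hu.1, ha.1], by linarith [hu.2, hb.2]⟩
      (v + a) ⟨by linarith [hv.1, ha.1], by linarith [hv.2, hb.2]⟩]
    ring_nf
  · rw [hd, ← image_image (f := fun t => t + a) (g := γ), image_add_const_Icc, zero_add,
      sub_add_cancel]

namespace IsGeodesicSegment

variable {s : Set X} {x y : X}

lemma exists_dist_eq (hs : IsGeodesicSegment s x y) {t : ℝ} (ht : t ∈ Icc 0 (dist x y)) :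
    ∃ z ∈ s, dist x z = t ∧ dist z y = dist x y - t := by
  obtain ⟨γ, h0, hL, hiso, rfl⟩ := hs
  obtain ⟨h1, h2⟩ := dist_endpoints_of_isometric_Icc hiso ht
  rw [h0] at h1
  rw [hL] at h2
  exact ⟨γ t, mem_image_of_mem γ ht, h1, h2⟩

lemma dist_add_dist (hs : IsGeodesicSegment s x y) {z : X} (hz : z ∈ s) :
    dist x z + dist z y = dist x y := by
  obtain ⟨γ, h0, hL, hiso, rfl⟩ := hs
  obtain ⟨t, ht, rfl⟩ := hz
  obtain ⟨h1, h2⟩ := dist_endpoints_of_isometric_Icc hiso ht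
  rw [h0] at h1
  rw [hL] at h2
  linarith

lemma gromovProd_eq_zero (hs : IsGeodesicSegment s x y) {z : X} (hz : z ∈ s) :
    gromovProd z x y = 0 := by
  have := hs.dist_add_dist hz
  simp only [gromovProd, dist_comm z x]
  linarith

lemma left_mem (hs : IsGeodesicSegment s x y) : x ∈ s := by
  obtain ⟨z, hz, hxz, -⟩ := hs.exists_dist_eq ⟨le_rfl, dist_nonneg⟩
  rwa [← dist_eq_zero.mp hxz] at hz

lemma right_mem (hs : IsGeodesicSegment s x y) : y ∈ s := by
  obtain ⟨z, hz, -, hzy⟩ := hs.exists_dist_eq ⟨dist_nonneg, le_rfl⟩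
  rwa [dist_eq_zero.mp (hzy.trans (sub_self _))] at hz

lemma symm (hs : IsGeodesicSegment s x y) : IsGeodesicSegment s y x := by
  obtain ⟨γ, h0, hL, hiso, rfl⟩ := hs
  set L := dist x y
  have hrefl : ∀ u ∈ Icc 0 L, L - u ∈ Icc 0 L := fun u hu => ⟨by linarith [hu.2], by linarith [hu.1]⟩
  refine ⟨fun t => γ (L - t), by simpa using hL, ?_, ?_, ?_⟩
  · simpa [dist_comm y x, L] using h0
  · intro u hu v hv
    rw [dist_comm y x] at hu hv
    rw [hiso _ (hrefl u hu) _ (hrefl v hv), ← abs_neg]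
    ring_nf
  · rw [dist_comm y x, ← image_image (g := γ) (f := fun t => L - t), image_const_sub_Icc,
      sub_zero, sub_self]

lemma exists_subsegment (hs : IsGeodesicSegment s x y) {p q : X} (hp : p ∈ s) (hq : q ∈ s) :
    ∃ sub ⊆ s, IsGeodesicSegment sub p q := by
  obtain ⟨γ, -, -, hiso, rfl⟩ := hs
  obtain ⟨a, ha, rfl⟩ := hp
  obtain ⟨b, hb, rfl⟩ := hq
  rcases le_total a b with hab | hba
  · exact ⟨_, image_mono (Icc_subset_Icc ha.1 hb.2), isGeodesicSegment_image_Icc hiso ha hb hab⟩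
  · exact ⟨_, image_mono (Icc_subset_Icc hb.1 ha.2),
      (isGeodesicSegment_image_Icc hiso hb ha hba).symm⟩

end IsGeodesicSegment

namespace IsDeltaHyperbolic

variable {δ : ℝ}

lemma gromovProd_le_or (h : IsDeltaHyperbolic X δ) {w x y z : X} {c : ℝ}
    (hc : gromovProd w x z ≤ c) : gromovProd w x y ≤ c + δ ∨ gromovProd w y z ≤ c + δ :=
  min_le_iff.mp <| by linarith [h x y z w]

lemma exists_mem_dist_le (h : IsDeltaHyperbolic X δ) {s : Set X} {x y : X}
    (hs : IsGeodesicSegment s x y) (w : X) : ∃ z ∈ s, dist w z ≤ gromovProd w x y + 2 * δ := by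
  -- the point `z` of `s` at which `(x, z)_w = (z, y)_w`
  obtain ⟨z, hz, hxz, hzy⟩ := hs.exists_dist_eq (t := (dist w x - dist w y + dist x y) / 2)
    ⟨by linarith [dist_triangle w x y], by linarith [dist_triangle w y x, dist_comm x y]⟩
  have hxz' : gromovProd w x z = (dist w z + gromovProd w x y) / 2 := by
    simp only [gromovProd, hxz]; ring
  have hzy' : gromovProd w z y = (dist w z + gromovProd w x y) / 2 := by
    simp only [gromovProd, hzy]; ring
  have := h x z y w
  rw [hxz', hzy', min_self] at this
  exact ⟨z, hz, by linarith⟩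

lemma exists_mem_dist_le_of_dist_endpoints_le (h : IsDeltaHyperbolic X δ) (hδ : 0 ≤ δ)
    {s t : Set X} {p q x y : X} (hs : IsGeodesicSegment s p q) (ht : IsGeodesicSegment t x y)
    {K : ℝ} (hpx : dist p x ≤ K) (hqy : dist q y ≤ K) {z : X} (hz : z ∈ s) :
    ∃ w ∈ t, dist z w ≤ K + 4 * δ := by
  have hz0 : gromovProd z p q ≤ 0 := (hs.gromovProd_eq_zero hz).le
  have hpzq := hs.dist_add_dist hz
  rcases h.gromovProd_le_or (y := x) hz0 with hpx' | hxq
  · refine ⟨x, ht.left_mem, ?_⟩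
    simp only [gromovProd] at hpx'
    linarith [dist_comm z p, dist_triangle z p x]
  rcases h.gromovProd_le_or (y := y) hxq with hxy | hyq
  · obtain ⟨w, hw, hzw⟩ := h.exists_mem_dist_le ht z
    exact ⟨w, hw, by linarith [dist_nonneg (x := p) (y := x)]⟩
  · refine ⟨y, ht.right_mem, ?_⟩
    simp only [gromovProd] at hyq
    linarith [dist_comm q y, dist_nonneg (x := z) (y := q)]

lemma hausdorffDist_le_of_dist_endpoints_le (h : IsDeltaHyperbolic X δ) (hδ : 0 ≤ δ)
    {s t : Set X} {p q x y : X} (hs : IsGeodesicSegment s p q) (ht : IsGeodesicSegment t x y)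
    {K : ℝ} (hpx : dist p x ≤ K) (hqy : dist q y ≤ K) :
    Metric.hausdorffDist s t ≤ K + 4 * δ :=
  Metric.hausdorffDist_le_of_mem_dist (by linarith [dist_nonneg (x := p) (y := x)])
    (fun _ hz => h.exists_mem_dist_le_of_dist_endpoints_le hδ hs ht hpx hqy hz)
    (fun _ hz => h.exists_mem_dist_le_of_dist_endpoints_le hδ ht hs
      (by rwa [dist_comm]) (by rwa [dist_comm]) hz)

lemma gromovProd_le_of_mem_shadow (h : IsDeltaHyperbolic X δ) {x y x' y' : X} {R : ℝ}
    (hx' : x' ∈ shadow y x R) (hy' : y' ∈ shadow x y R) (hxy : 2 * R + δ < dist x y) :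
    gromovProd x x' y' ≤ R + δ := by
  rw [mem_shadow_iff, gromovProd_comm] at hx'
  rw [mem_shadow_iff] at hy'
  refine (h.gromovProd_le_or (y := y') hx').resolve_right fun hy'y => ?_
  simp only [gromovProd] at hy' hy'y
  linarith [dist_comm x y, dist_comm y' y]

end IsDeltaHyperbolic

end

/-- There is a constant `D ≥ 0` depending only on `δ`, and a constant `E ≥ 0` depending
only on `R` and `δ`, such that if `d(x,y) ≥ 2R + D`, then for any `x' ∈ S_y(x,R)` and
`y' ∈ S_x(y,R)`, any geodesic segment from `x'` to `y'` contains a subsegment `[p',q']`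
which `E`-fellow travels a geodesic segment `[x,y]`. -/
theorem shadow_fellow_travel {X : Type*} [MetricSpace X] (δ : ℝ) (hδ : 0 ≤ δ)
    (hgeo : IsGeodesicSpace X) (hhyp : IsDeltaHyperbolic X δ) :
    ∃ D : ℝ, 0 ≤ D ∧ ∀ R : ℝ, 0 ≤ R → ∃ E : ℝ, 0 ≤ E ∧
      ∀ x y : X, dist x y ≥ 2 * R + D →
        ∀ x' ∈ shadow y x R, ∀ y' ∈ shadow x y R,
          ∀ g : Set X, IsGeodesicSegment g x' y' →
            ∃ p' q' : X, ∃ sub : Set X, sub ⊆ g ∧ IsGeodesicSegment sub p' q' ∧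
              ∃ seg : Set X, IsGeodesicSegment seg x y ∧
                Metric.hausdorffDist sub seg ≤ E := by
  refine ⟨δ + 1, by linarith, fun R hR => ⟨R + 3 * δ + 4 * δ, by linarith, ?_⟩⟩
  intro x y hxy x' hx' y' hy' g hg
  obtain ⟨seg, hseg⟩ := hgeo x y
  have hx : gromovProd x x' y' ≤ R + δ :=
    hhyp.gromovProd_le_of_mem_shadow hx' hy' (by linarith)
  have hy : gromovProd y y' x' ≤ R + δ :=
    hhyp.gromovProd_le_of_mem_shadow hy' hx' (by rw [dist_comm]; linarith)
  obtain ⟨p, hp, hxp⟩ := hhyp.exists_mem_dist_le hg x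
  obtain ⟨q, hq, hyq⟩ := hhyp.exists_mem_dist_le hg y
  rw [gromovProd_comm] at hyq
  obtain ⟨sub, hsub, hsubg⟩ := hg.exists_subsegment hp hq
  refine ⟨p, q, sub, hsub, hsubg, seg, hseg, ?_⟩
  exact hhyp.hausdorffDist_le_of_dist_endpoints_le hδ hsubg hseg
    (by rw [dist_comm]; linarith) (by rw [dist_comm]; linarith)
end

section
/- Let (X,d) be a geodesic metric space which is δ-hyperbolic (δ ≥ 0). Then there is a constant K ≥ 0, depending only on δ, such that for any geodesic segment [x,y], any points x', y' ∈ X with nearest-point projections p, q respectively to [x,y], if d(p,q) ≥ K then every geodesic segment from x' to y' contains a point within distance K of p and a point within distance K of q. -/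
lemma geodesic_reverse {X : Type*} [MetricSpace X] {s : Set X} {x y : X}
    (h : IsGeodesicSegment s x y) : IsGeodesicSegment s y x := by
  obtain ⟨γ, h0, hL, hiso, hs⟩ := h
  set L := dist x y with hLdef
  refine ⟨fun t => γ (L - t), by simpa using hL, ?_, ?_, ?_⟩
  · rw [dist_comm y x, ← hLdef]; simpa using h0
  · intro u hu v hv
    rw [dist_comm y x, ← hLdef] at hu hv
    rw [hiso (L - u) ⟨by linarith [hu.2], by linarith [hu.1]⟩
        (L - v) ⟨by linarith [hv.2], by linarith [hv.1]⟩, abs_sub_comm]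
    congr 1; ring
  · rw [dist_comm y x, ← hLdef, hs,
      show (fun t => γ (L - t)) = γ ∘ (fun t => L - t) from rfl, Set.image_comp,
      Set.image_const_sub_Icc]
    simp

/-- Projection lemma: if `p` is a nearest point on the segment to `x'`, then for any
`z` on the segment, the Gromov product `(x',z)_p` is at most `2δ+1`. -/
lemma proj_lemma {X : Type*} [MetricSpace X] {δ : ℝ} (hδ : 0 ≤ δ)
    (hhyp : IsDeltaHyperbolic X δ) {seg : Set X} {x y : X}
    (hseg : IsGeodesicSegment seg x y) (x' : X) {p : X} (hp : p ∈ seg)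
    (hproj : dist x' p = Metric.infDist x' seg) {z : X} (hz : z ∈ seg) :
    gromovProd p x' z ≤ 2 * δ + 1 := by
  obtain ⟨γ, h0, hL, hiso, hs⟩ := hseg
  rw [hs] at hp hz
  obtain ⟨s, hsI, rfl⟩ := hp
  obtain ⟨r, hrI, rfl⟩ := hz
  have hmin : ∀ m ∈ Set.Icc (0:ℝ) (dist x y), dist x' (γ s) ≤ dist x' (γ m) := by
    intro m hm
    rw [hproj, hs]
    exact Metric.infDist_le_dist_of_mem ⟨m, hm, rfl⟩
  by_cases hsr : s = r
  · subst hsr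
    have : gromovProd (γ s) x' (γ s) = 0 := by
      unfold gromovProd
      rw [dist_comm (γ s) x', dist_self]
      ring
    linarith
  · set d0 := |s - r| with hd0def
    have hd0 : 0 < d0 := abs_pos.mpr (sub_ne_zero.mpr hsr)
    set t := min d0 (2 * δ + 1) with htdef
    have ht0 : 0 ≤ t := le_min hd0.le (by linarith)
    have htd0 : t ≤ d0 := min_le_left _ _
    have ht2 : t ≤ 2 * δ + 1 := min_le_right _ _
    set c := t / d0 with hcdef
    have hc0 : 0 ≤ c := div_nonneg ht0 hd0.le
    have hc1 : c ≤ 1 := (div_le_one hd0).mpr htd0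
    set w := s + c * (r - s) with hwdef
    have hwI : w ∈ Set.Icc (0:ℝ) (dist x y) := by
      constructor
      · nlinarith [hsI.1, hrI.1]
      · nlinarith [hsI.2, hrI.2]
    have dpm : dist (γ s) (γ w) = t := by
      rw [hiso s hsI w hwI]
      have : s - w = c * (s - r) := by rw [hwdef]; ring
      rw [this, abs_mul, abs_of_nonneg hc0, ← hd0def, hcdef]
      field_simp
    have dmz : dist (γ w) (γ r) = d0 - t := by
      rw [hiso w hwI r hrI]
      have : w - r = (1 - c) * (s - r) := by rw [hwdef]; ring
      rw [this, abs_mul, abs_of_nonneg (by linarith), ← hd0def, hcdef]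
      field_simp
    have dpz : dist (γ s) (γ r) = d0 := by rw [hiso s hsI r hrI, hd0def]
    have hdm := hmin w hwI
    have hdz := hmin r hrI
    have hyp := hhyp (γ s) (γ w) (γ r) x'
    unfold gromovProd at hyp ⊢
    rw [dpm, dmz, dpz] at hyp
    rw [dist_comm (γ s) x', dpz]
    rcases min_cases ((dist x' (γ s) + dist x' (γ w) - t) / 2)
      ((dist x' (γ w) + dist x' (γ r) - (d0 - t)) / 2) with ⟨hm, _⟩ | ⟨hm, _⟩
    · rw [hm] at hyp; linarith
    · rw [hm] at hyp
      have ht2δ : t ≤ 2 * δ := by linarith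
      rcases min_choice d0 (2 * δ + 1) with hch | hch
      · rw [← htdef] at hch
        have hd0small : d0 ≤ 2 * δ := by rw [← hch]; exact ht2δ
        linarith
      · rw [← htdef] at hch; linarith

/-- Any point is within `(x',y')_w + 2δ` of a geodesic from `x'` to `y'`. -/
lemma near_point {X : Type*} [MetricSpace X] {δ : ℝ}
    (hhyp : IsDeltaHyperbolic X δ) {seg' : Set X} {x' y' : X}
    (h : IsGeodesicSegment seg' x' y') (w : X) :
    ∃ m ∈ seg', dist w m ≤ gromovProd w x' y' + 2 * δ := by
  obtain ⟨γ, h0, hL, hiso, hs⟩ := h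
  set L := dist x' y' with hLdef
  set t0 := (dist x' w + L - dist w y') / 2 with ht0def
  have tri1 : dist w y' ≤ dist w x' + L := dist_triangle w x' y'
  have tri2 : dist x' w ≤ L + dist y' w := dist_triangle x' y' w
  have c1 : dist x' w = dist w x' := dist_comm _ _
  have c2 : dist y' w = dist w y' := dist_comm _ _
  have ht0I : t0 ∈ Set.Icc (0:ℝ) L := ⟨by linarith, by linarith⟩
  have hL0 : (0:ℝ) ∈ Set.Icc (0:ℝ) L := ⟨le_refl _, dist_nonneg⟩
  have hLL : L ∈ Set.Icc (0:ℝ) L := ⟨dist_nonneg, le_refl _⟩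
  have d1 : dist x' (γ t0) = t0 := by
    rw [← h0, hiso 0 hL0 t0 ht0I, abs_of_nonpos (by linarith [ht0I.1])]; ring
  have d2 : dist (γ t0) y' = L - t0 := by
    rw [← hL, hiso t0 ht0I L hLL, abs_of_nonpos (by linarith [ht0I.2])]; ring
  refine ⟨γ t0, by rw [hs]; exact ⟨t0, ht0I, rfl⟩, ?_⟩
  have hyp := hhyp x' (γ t0) y' w
  unfold gromovProd at hyp ⊢
  rw [d1, d2] at hyp
  rcases min_cases ((dist w x' + dist w (γ t0) - t0) / 2)
    ((dist w (γ t0) + dist w y' - (L - t0)) / 2) with ⟨hm, _⟩ | ⟨hm, _⟩ <;>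
    rw [hm] at hyp <;> linarith [hLdef]

lemma half_lemma {X : Type*} [MetricSpace X] {δ : ℝ} (hδ : 0 ≤ δ)
    (hhyp : IsDeltaHyperbolic X δ) {x y : X} {seg : Set X}
    (hseg : IsGeodesicSegment seg x y) (x' y' : X) {p q : X}
    (hp : p ∈ seg) (hq : q ∈ seg)
    (hpp : dist x' p = Metric.infDist x' seg)
    (hqq : dist y' q = Metric.infDist y' seg)
    (hD : dist p q ≥ 6 * δ + 3) {seg' : Set X}
    (hseg' : IsGeodesicSegment seg' x' y') :
    ∃ u ∈ seg', dist u p ≤ 6 * δ + 3 := by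
  have h1 : gromovProd p x' q ≤ 2 * δ + 1 := proj_lemma hδ hhyp hseg x' hp hpp hq
  have h2 : gromovProd q y' p ≤ 2 * δ + 1 := proj_lemma hδ hhyp hseg y' hq hqq hp
  have hyp := hhyp x' y' q p
  have hG : gromovProd p x' y' ≤ 3 * δ + 1 := by
    unfold gromovProd at h1 h2 hyp ⊢
    have c1 : dist q p = dist p q := dist_comm _ _
    have c2 : dist q y' = dist y' q := dist_comm _ _
    have c3 : dist p y' = dist y' p := dist_comm _ _
    rcases min_cases ((dist p x' + dist p y' - dist x' y') / 2)
      ((dist p y' + dist p q - dist y' q) / 2) with ⟨hm, _⟩ | ⟨hm, _⟩ <;>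
      rw [hm] at hyp <;> linarith
  obtain ⟨m, hm, hdm⟩ := near_point hhyp hseg' p
  exact ⟨m, hm, by rw [dist_comm]; linarith⟩

/-- There is a constant `K ≥ 0` depending only on `δ` such that for any geodesic segment
`[x,y]`, any points `x', y'` with nearest-point projections `p, q` respectively to `[x,y]`,
if `d(p,q) ≥ K` then every geodesic segment from `x'` to `y'` contains a point within
distance `K` of `p` and a point within distance `K` of `q`. -/
theorem geodesic_passes_near_projections {X : Type*} [MetricSpace X] (δ : ℝ) (hδ : 0 ≤ δ)
    (hgeo : IsGeodesicSpace X) (hhyp : IsDeltaHyperbolic X δ) :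
    ∃ K : ℝ, 0 ≤ K ∧
      ∀ x y : X, ∀ seg : Set X, IsGeodesicSegment seg x y →
        ∀ x' y' : X, ∀ p ∈ seg, ∀ q ∈ seg,
          dist x' p = Metric.infDist x' seg →
          dist y' q = Metric.infDist y' seg →
          dist p q ≥ K →
            ∀ seg' : Set X, IsGeodesicSegment seg' x' y' →
              (∃ u ∈ seg', dist u p ≤ K) ∧ (∃ v ∈ seg', dist v q ≤ K) := by
  refine ⟨6 * δ + 3, by linarith, ?_⟩
  intro x y seg hseg x' y' p hp q hq hpp hqq hD seg' hseg'
  constructor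
  · exact half_lemma hδ hhyp hseg x' y' hp hq hpp hqq hD hseg'
  · exact half_lemma hδ hhyp hseg y' x' hq hp hqq hpp
      (by rwa [dist_comm]) (geodesic_reverse hseg')
end

section
/- Let (Ω, μ) be a probability space, let σ : Ω → Ω be an ergodic measure-preserving transformation, let A ⊆ Ω be a measurable set, and let e₁ be a real number with 0 < e₁ < 1/2. Then for μ-almost every ω ∈ Ω, the proportion (1/N) · #{ n ∈ ℕ : e₁·N ≤ n ≤ (1−e₁)·N and σⁿ(ω) ∈ A } converges to (1 − 2e₁) · μ(A) as N → ∞. -/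
/-!
The window count at time `N` is the number of visits of the orbit of `ω` to `A` before
`⌊(1 - e₁) N⌋ + 1` minus the number of visits before `⌈e₁ N⌉`, so the theorem follows from the
pointwise ergodic theorem for `1_A`, which says that `#{n < N : σⁿ ω ∈ A} = N μ(A) + o(N)`.

The pointwise ergodic theorem is derived from the maximal ergodic theorem
`∫_{∃ n, S_n f > 0} f ≥ 0`, proved with Garsia's function `M_n = max_{k ≤ n} S_k f`.
If `∫ f < 0`, the set where the Birkhoff sums `S_n f` are unbounded above is invariant, so by
ergodicity it is null or conull; if it were conull the maximal ergodic theorem would give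
`∫ f ≥ 0`. Applied to `f - c` and `c - f` for rational `c`, this squeezes the Birkhoff averages
to `∫ f`.
-/

open MeasureTheory Filter Set Topology

section BirkhoffSum

variable {Ω : Type*} {σ : Ω → Ω} {f : Ω → ℝ}

lemma birkhoffSum_le_partialSups {k n : ℕ} (h : k ≤ n) (ω : Ω) :
    birkhoffSum σ f k ω ≤ partialSups (birkhoffSum σ f) n ω :=
  le_partialSups_of_le (birkhoffSum σ f) h ω

lemma partialSups_birkhoffSum_nonneg (n : ℕ) (ω : Ω) :
    0 ≤ partialSups (birkhoffSum σ f) n ω := by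
  simpa using birkhoffSum_le_partialSups (σ := σ) (f := f) n.zero_le ω

lemma exists_partialSups_birkhoffSum_eq (n : ℕ) (ω : Ω) :
    ∃ k ≤ n, partialSups (birkhoffSum σ f) n ω = birkhoffSum σ f k ω := by
  rw [partialSups_eq_sup'_range, Finset.sup'_apply]
  obtain ⟨k, hk, h⟩ := Finset.exists_mem_eq_sup' Finset.nonempty_range_add_one
    (fun k => birkhoffSum σ f k ω)
  exact ⟨k, Nat.lt_succ_iff.mp (Finset.mem_range.mp hk), h⟩

/-- On `{M > 0}` the maximum is attained by some `S_{k+1} ω = f ω + S_k (σ ω) ≤ f ω + M (σ ω)`. -/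
lemma partialSups_birkhoffSum_sub_comp_le_indicator (n : ℕ) (ω : Ω) :
    partialSups (birkhoffSum σ f) n ω - partialSups (birkhoffSum σ f) n (σ ω) ≤
      {x | 0 < partialSups (birkhoffSum σ f) n x}.indicator f ω := by
  by_cases hω : ω ∈ {x | 0 < partialSups (birkhoffSum σ f) n x}
  · rw [indicator_of_mem hω]
    obtain ⟨k, hkn, hk⟩ := exists_partialSups_birkhoffSum_eq (σ := σ) (f := f) n ω
    obtain ⟨k, rfl⟩ : ∃ j, k = j + 1 :=
      Nat.exists_eq_succ_of_ne_zero (by rintro rfl; simp [hk] at hω)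
    have := birkhoffSum_le_partialSups (σ := σ) (f := f) (Nat.le_of_succ_le hkn) (σ ω)
    rw [hk, birkhoffSum_succ']
    linarith
  · rw [indicator_of_notMem hω]
    have : partialSups (birkhoffSum σ f) n ω ≤ 0 := not_lt.mp hω
    linarith [partialSups_birkhoffSum_nonneg (σ := σ) (f := f) n (σ ω)]

lemma bddAbove_birkhoffSum_apply_iff (ω : Ω) :
    BddAbove (range fun n => birkhoffSum σ f n (σ ω)) ↔
      BddAbove (range fun n => birkhoffSum σ f n ω) := by
  simp only [bddAbove_def, forall_mem_range]
  constructor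
  · rintro ⟨K, hK⟩
    refine ⟨max 0 (f ω + K), fun n => ?_⟩
    cases n with
    | zero => simp
    | succ n => exact le_max_of_le_right (by rw [birkhoffSum_succ']; linarith [hK n])
  · rintro ⟨K, hK⟩
    refine ⟨K - f ω, fun n => ?_⟩
    linarith [birkhoffSum_succ' σ f n ω ▸ hK (n + 1)]

end BirkhoffSum

section MaximalErgodic

variable {Ω : Type*} [MeasurableSpace Ω] {μ : Measure Ω} {σ : Ω → Ω} {f : Ω → ℝ}

lemma measurable_birkhoffSum (hσ : Measurable σ) (hf : Measurable f) (n : ℕ) :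
    Measurable (birkhoffSum σ f n) :=
  Finset.measurable_sum _ fun i _ => hf.comp (hσ.iterate i)

lemma measurable_partialSups_birkhoffSum (hσ : Measurable σ) (hf : Measurable f) (n : ℕ) :
    Measurable (partialSups (birkhoffSum σ f) n) := by
  rw [partialSups_eq_sup'_range]
  exact Finset.sup'_induction (p := Measurable) _ _ (fun _ h₁ _ h₂ => h₁.sup h₂)
    fun k _ => measurable_birkhoffSum hσ hf k

lemma integrable_partialSups_birkhoffSum (hσ : MeasurePreserving σ μ μ) (hf : Integrable f μ)
    (n : ℕ) : Integrable (partialSups (birkhoffSum σ f) n) μ := by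
  rw [partialSups_eq_sup'_range]
  exact Finset.sup'_induction (p := (Integrable · μ)) _ _ (fun _ h₁ _ h₂ => h₁.sup h₂)
    fun k _ => integrable_finsetSum _ fun i _ => (hσ.iterate i).integrable_comp_of_integrable hf

lemma setIntegral_partialSups_birkhoffSum_pos_nonneg (hσ : MeasurePreserving σ μ μ)
    (hfm : Measurable f) (hf : Integrable f μ) (n : ℕ) :
    0 ≤ ∫ ω in {ω | 0 < partialSups (birkhoffSum σ f) n ω}, f ω ∂μ := by
  set M := partialSups (birkhoffSum σ f) n
  have hMm := measurable_partialSups_birkhoffSum hσ.measurable hfm n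
  have hM := integrable_partialSups_birkhoffSum hσ hf n
  have hMσi : Integrable (fun ω => M (σ ω)) μ := hσ.integrable_comp_of_integrable hM
  have hMσ : ∫ ω, M (σ ω) ∂μ = ∫ ω, M ω ∂μ := by
    rw [← integral_map hσ.measurable.aemeasurable hMm.aestronglyMeasurable, hσ.map_eq]
  rw [← integral_indicator (measurableSet_lt measurable_const hMm)]
  calc (0 : ℝ) = ∫ ω, (M ω - M (σ ω)) ∂μ := by
        rw [integral_sub hM hMσi, hMσ, sub_self]
    _ ≤ _ := integral_mono (hM.sub hMσi)
        (hf.indicator (measurableSet_lt measurable_const hMm))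
        (partialSups_birkhoffSum_sub_comp_le_indicator n)

theorem setIntegral_birkhoffSum_pos_nonneg (hσ : MeasurePreserving σ μ μ)
    (hfm : Measurable f) (hf : Integrable f μ) :
    0 ≤ ∫ ω in {ω | ∃ n, 0 < birkhoffSum σ f n ω}, f ω ∂μ := by
  have hU : {ω | ∃ n, 0 < birkhoffSum σ f n ω} =
      ⋃ n, {ω | 0 < partialSups (birkhoffSum σ f) n ω} := by
    ext ω
    simp only [mem_ofPred_eq, mem_iUnion]
    constructor
    · rintro ⟨n, hn⟩
      exact ⟨n, hn.trans_le (birkhoffSum_le_partialSups le_rfl ω)⟩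
    · rintro ⟨n, hn⟩
      obtain ⟨k, -, hk⟩ := exists_partialSups_birkhoffSum_eq (σ := σ) (f := f) n ω
      exact ⟨k, hk ▸ hn⟩
  rw [hU]
  refine ge_of_tendsto (tendsto_setIntegral_of_monotone (fun n => measurableSet_lt
    measurable_const (measurable_partialSups_birkhoffSum hσ.measurable hfm n))
    (fun m n hmn ω hω => ?_) hf.integrableOn)
    (Eventually.of_forall (setIntegral_partialSups_birkhoffSum_pos_nonneg hσ hfm hf))
  exact lt_of_lt_of_le hω ((partialSups (birkhoffSum σ f)).monotone hmn ω)

/-- The set where the Birkhoff sums are unbounded above is invariant, so by ergodicity it is null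
or conull; if it were conull, the maximal ergodic theorem would give `0 ≤ ∫ f`. -/
theorem Ergodic.ae_bddAbove_birkhoffSum (hσ : Ergodic σ μ) (hfm : Measurable f)
    (hf : Integrable f μ) (hneg : ∫ ω, f ω ∂μ < 0) :
    ∀ᵐ ω ∂μ, BddAbove (range fun n => birkhoffSum σ f n ω) := by
  set B := {ω | BddAbove (range fun n => birkhoffSum σ f n ω)}
  have hB : MeasurableSet B := measurableSet_bddAbove_range
    (measurable_birkhoffSum hσ.measurable hfm)
  have hBinv : σ ⁻¹' Bᶜ = Bᶜ := by
    rw [preimage_compl]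
    exact congrArg _ (Set.ext fun ω => bddAbove_birkhoffSum_apply_iff ω)
  rcases hσ.ae_empty_or_univ hB.compl hBinv with hnull | hconull
  · exact ae_eq_empty.mp hnull
  · have hsub : Bᶜ ⊆ {ω | ∃ n, 0 < birkhoffSum σ f n ω} := fun ω hω => by
      obtain ⟨_, ⟨n, rfl⟩, hpos⟩ := not_bddAbove_iff.mp hω 0
      exact ⟨n, hpos⟩
    have hpos : {ω | ∃ n, 0 < birkhoffSum σ f n ω} =ᵐ[μ] univ :=
      (subset_univ _).eventuallyLE.antisymm (hconull.symm.le.trans hsub.eventuallyLE)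
    have := setIntegral_birkhoffSum_pos_nonneg hσ.toMeasurePreserving hfm hf
    rw [setIntegral_congr_set hpos, setIntegral_univ] at this
    exact absurd this hneg.not_ge

theorem Ergodic.ae_eventually_birkhoffAverage_lt [IsProbabilityMeasure μ] (hσ : Ergodic σ μ)
    (hfm : Measurable f) (hf : Integrable f μ) {c : ℝ} (hc : ∫ ω, f ω ∂μ < c) :
    ∀ᵐ ω ∂μ, ∀ᶠ n in atTop, birkhoffAverage ℝ σ f n ω < c := by
  obtain ⟨α, hfα, hαc⟩ := exists_between hc
  have hneg : ∫ ω, (f ω - α) ∂μ < 0 := by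
    rw [integral_sub hf (integrable_const α), integral_const, probReal_univ, one_smul]
    linarith
  filter_upwards [hσ.ae_bddAbove_birkhoffSum (hfm.sub measurable_const)
    (hf.sub (integrable_const α)) hneg] with ω ⟨K, hK⟩
  have hsum (n : ℕ) : birkhoffSum σ f n ω ≤ n * α + K := by
    have hKn : birkhoffSum σ (fun x => f x - α) n ω ≤ K := hK ⟨n, rfl⟩
    simp only [birkhoffSum, Finset.sum_sub_distrib, Finset.sum_const, Finset.card_range,
      nsmul_eq_mul] at hKn
    exact sub_le_iff_le_add'.mp hKn
  have hlim : Tendsto (fun n : ℕ => α + K / n) atTop (𝓝 α) := by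
    simpa using tendsto_const_nhds.add (tendsto_const_div_atTop_nhds_zero_nat K)
  filter_upwards [hlim.eventually (gt_mem_nhds hαc), eventually_gt_atTop 0] with n hn hn0
  calc birkhoffAverage ℝ σ f n ω = birkhoffSum σ f n ω / n := by
        rw [birkhoffAverage, smul_eq_mul, inv_mul_eq_div]
    _ ≤ α + K / n := by
        rw [div_le_iff₀ (by positivity), add_mul, div_mul_cancel₀ _ (by positivity)]
        linarith [hsum n]
    _ < c := hn

lemma Ergodic.ae_forall_rat_eventually_birkhoffAverage_lt [IsProbabilityMeasure μ]
    (hσ : Ergodic σ μ) (hfm : Measurable f) (hf : Integrable f μ) :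
    ∀ᵐ ω ∂μ, ∀ q : ℚ, ∫ ω, f ω ∂μ < q → ∀ᶠ n in atTop, birkhoffAverage ℝ σ f n ω < q := by
  refine ae_all_iff.mpr fun q => ?_
  by_cases hq : ∫ ω, f ω ∂μ < q
  · filter_upwards [hσ.ae_eventually_birkhoffAverage_lt hfm hf hq] with ω hω using fun _ => hω
  · exact Eventually.of_forall fun ω h => absurd h hq

theorem Ergodic.ae_tendsto_birkhoffAverage [IsProbabilityMeasure μ] (hσ : Ergodic σ μ)
    (hfm : Measurable f) (hf : Integrable f μ) :
    ∀ᵐ ω ∂μ, Tendsto (birkhoffAverage ℝ σ f · ω) atTop (𝓝 (∫ ω, f ω ∂μ)) := by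
  filter_upwards [hσ.ae_forall_rat_eventually_birkhoffAverage_lt hfm hf,
    hσ.ae_forall_rat_eventually_birkhoffAverage_lt hfm.neg hf.neg] with ω hupper hlower
  refine tendsto_order.mpr ⟨fun a ha => ?_, fun a ha => ?_⟩
  · obtain ⟨q, haq, hq⟩ := exists_rat_btwn ha
    have hq' : ∫ ω, (-f) ω ∂μ < (-q : ℚ) := by
      simp only [Pi.neg_apply, integral_neg, Rat.cast_neg]
      linarith
    filter_upwards [hlower (-q) hq'] with n hn
    rw [birkhoffAverage_neg, Pi.neg_apply, Pi.neg_apply] at hn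
    push_cast at hn
    linarith
  · obtain ⟨q, hq, hqa⟩ := exists_rat_btwn ha
    filter_upwards [hupper q hq] with n hn using hn.trans hqa

end MaximalErgodic

section WindowCount

lemma birkhoffSum_indicator_one_eq_count {Ω R : Type*} [AddCommMonoidWithOne R] (σ : Ω → Ω)
    (A : Set Ω) [DecidablePred (· ∈ A)] (n : ℕ) (ω : Ω) :
    birkhoffSum σ (A.indicator (1 : Ω → R)) n ω = Nat.count (fun k => σ^[k] ω ∈ A) n := by
  simp [birkhoffSum, Nat.count_eq_card_filter_range, indicator_apply, Finset.sum_boole]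

lemma Nat.count_eq_ncard_setOf (P : ℕ → Prop) [DecidablePred P] (m : ℕ) :
    Nat.count P m = {n | n < m ∧ P n}.ncard := by
  rw [Nat.count_eq_card_filter_range, ← ncard_coe_finset]
  congr
  ext
  simp

lemma ncard_setOf_le_and_le_and (P : ℕ → Prop) [DecidablePred P] {s t : ℝ} (hst : s ≤ t)
    (ht : 0 ≤ t) :
    {n : ℕ | s ≤ n ∧ n ≤ t ∧ P n}.ncard = Nat.count P (⌊t⌋₊ + 1) - Nat.count P ⌈s⌉₊ := by
  have hceil : ⌈s⌉₊ ≤ ⌊t⌋₊ + 1 := (Nat.ceil_mono hst).trans (Nat.ceil_le_floor_add_one t)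
  have hwindow : {n : ℕ | s ≤ n ∧ n ≤ t ∧ P n} =
      {n | n < ⌊t⌋₊ + 1 ∧ P n} \ {n | n < ⌈s⌉₊ ∧ P n} := by
    ext n
    simp only [Set.mem_sdiff, mem_ofPred_eq, Nat.lt_succ_iff, Nat.le_floor_iff ht, Nat.lt_ceil]
    constructor
    · rintro ⟨hs, ht, hP⟩
      exact ⟨⟨ht, hP⟩, fun h => (h.1.not_ge hs).elim⟩
    · rintro ⟨⟨ht, hP⟩, hs⟩
      exact ⟨not_lt.mp fun h => hs ⟨h, hP⟩, ht, hP⟩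
  have hsub : {n | n < ⌈s⌉₊ ∧ P n} ⊆ {n | n < ⌊t⌋₊ + 1 ∧ P n} :=
    fun n hn => ⟨hn.1.trans_le hceil, hn.2⟩
  rw [hwindow, ncard_sdiff hsub ((finite_lt_nat _).subset fun _ hn => hn.1),
    Nat.count_eq_ncard_setOf, Nat.count_eq_ncard_setOf]

lemma tendsto_comp_div_of_tendsto_div {u : ℕ → ℝ} {k : ℕ → ℕ} {a c : ℝ}
    (hu : Tendsto (fun n => u n / n) atTop (𝓝 c))
    (hk : Tendsto (fun N => (k N : ℝ) / N) atTop (𝓝 a)) (ha : 0 < a) :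
    Tendsto (fun N => u (k N) / N) atTop (𝓝 (c * a)) := by
  have hk_top : Tendsto k atTop atTop := by
    refine tendsto_natCast_atTop_iff.mp
      ((hk.pos_mul_atTop ha tendsto_natCast_atTop_atTop).congr' ?_)
    filter_upwards [eventually_gt_atTop 0] with N hN
    field_simp
  refine ((hu.comp hk_top).mul hk).congr' ?_
  filter_upwards [hk_top.eventually_gt_atTop 0] with N hN
  simp only [Function.comp_apply]
  field_simp

theorem tendsto_ncard_window_div {P : ℕ → Prop} [DecidablePred P] {a b c : ℝ} (ha : 0 < a)
    (hab : a ≤ b) (hP : Tendsto (fun N : ℕ => (Nat.count P N : ℝ) / N) atTop (𝓝 c)) :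
    Tendsto (fun N : ℕ => ({n : ℕ | a * N ≤ n ∧ n ≤ b * N ∧ P n}.ncard : ℝ) / N) atTop
      (𝓝 ((b - a) * c)) := by
  have hceil : Tendsto (fun N : ℕ => (⌈a * N⌉₊ : ℝ) / N) atTop (𝓝 a) :=
    (tendsto_nat_ceil_mul_div_atTop ha.le).comp tendsto_natCast_atTop_atTop
  have hfloor : Tendsto (fun N : ℕ => ((⌊b * N⌋₊ + 1 : ℕ) : ℝ) / N) atTop (𝓝 b) := by
    have := ((tendsto_nat_floor_mul_div_atTop (ha.le.trans hab)).comp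
      tendsto_natCast_atTop_atTop).add tendsto_one_div_atTop_nhds_zero_nat
    rw [add_zero] at this
    refine this.congr fun N => ?_
    simp only [Function.comp_apply, Nat.cast_add, Nat.cast_one, add_div]
  have hlim := (tendsto_comp_div_of_tendsto_div hP hfloor (ha.trans_le hab)).sub
    (tendsto_comp_div_of_tendsto_div hP hceil ha)
  rw [← mul_sub, mul_comm] at hlim
  refine hlim.congr fun N => ?_
  have hwindow : a * N ≤ b * N := by gcongr
  rw [ncard_setOf_le_and_le_and P hwindow (mul_nonneg (ha.le.trans hab) N.cast_nonneg),
    Nat.cast_sub, sub_div]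
  exact Nat.count_monotone P ((Nat.ceil_mono hwindow).trans (Nat.ceil_le_floor_add_one _))

end WindowCount

/-- If `σ` is an ergodic measure-preserving transformation of a probability space, `A` is a
measurable set, and `0 < e₁ < 1/2`, then for almost every `ω` the proportion
`(1/N) · #{n : e₁·N ≤ n ≤ (1−e₁)·N and σⁿ(ω) ∈ A}` converges to `(1 − 2e₁)·μ(A)`. -/
theorem ae_window_frequency_tendsto {Ω : Type*} [MeasurableSpace Ω]
    (μ : Measure Ω) [IsProbabilityMeasure μ] (σ : Ω → Ω) (hσ : Ergodic σ μ)
    (A : Set Ω) (hA : MeasurableSet A)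
    (e₁ : ℝ) (he₁ : 0 < e₁) (he₁' : e₁ < 1 / 2) :
    ∀ᵐ ω ∂μ, Tendsto
      (fun N : ℕ =>
        (({n : ℕ | e₁ * N ≤ (n : ℝ) ∧ (n : ℝ) ≤ (1 - e₁) * N ∧ σ^[n] ω ∈ A}.ncard : ℝ))
          / N)
      atTop (nhds ((1 - 2 * e₁) * (μ A).toReal)) := by
  classical
  have hbirkhoff := hσ.ae_tendsto_birkhoffAverage (measurable_one.indicator hA)
    ((integrable_const (1 : ℝ)).indicator hA)
  rw [integral_indicator_one hA] at hbirkhoff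
  filter_upwards [hbirkhoff] with ω hω
  have hfreq : Tendsto (fun N : ℕ => (Nat.count (fun n => σ^[n] ω ∈ A) N : ℝ) / N) atTop
      (𝓝 (μ A).toReal) := by
    refine hω.congr fun N => ?_
    rw [birkhoffAverage, birkhoffSum_indicator_one_eq_count, smul_eq_mul, inv_mul_eq_div]
  have hwindow := tendsto_ncard_window_div (b := 1 - e₁) he₁ (by linarith) hfreq
  rwa [show 1 - e₁ - e₁ = 1 - 2 * e₁ by ring] at hwindow
end
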